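/- arXiv:2602.14732 — 2 statements merged into one kernel-verified Lean document; each statement's English description precedes it below -/
import Mathlib

section
/- Let (P_i)_{i∈[n]} be PSD matrices on 𝒴, let 𝒳 = ℂ^n, and let 𝐏 := ∑_{i=1}^n |i⟩⟨i| ⊗ P_i be the block-diagonal matrix on 𝒳⊗𝒴 with blocks P_i. Let Q be a PSD matrix on 𝒴 and let 𝐐 be any PSD matrix on 𝒳⊗𝒴 with Tr_𝒳[𝐐] = Q, with block decomposition 𝐐 = ∑_{i,j} |i⟩⟨j| ⊗ Q_{ij}. Then the block-diagonal pinching 𝐐' := ∑_{i=1}^n |i⟩⟨i| ⊗ Q_{ii} satisfies Tr_𝒳[𝐐'] = Q and F(𝐏, 𝐐) ≤ F(𝐏, 𝐐'). Consequently, the supremum of F(𝐏, ·) over {𝐐 PSD : Tr_𝒳[𝐐] = Q} is attained at a block-diagonal matrix. -/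
open Matrix Kronecker
open scoped ComplexOrder

noncomputable section

open Classical in
/-- The positive semidefinite square root of a PSD matrix (junk value `0` otherwise). -/
noncomputable def msqrt {n : Type*} [Fintype n] [DecidableEq n] (A : Matrix n n ℂ) :
    Matrix n n ℂ :=
  if h : A.PosSemidef then
    (h.1.eigenvectorUnitary : Matrix n n ℂ) * diagonal ((↑) ∘ (√·) ∘ h.1.eigenvalues) *
      (star h.1.eigenvectorUnitary : Matrix n n ℂ)
  else 0

/-- The (square-root) fidelity `F(P,Q) = Tr[√(√Q P √Q)]`. -/
noncomputable def fidelity {n : Type*} [Fintype n] [DecidableEq n]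
    (P Q : Matrix n n ℂ) : ℝ :=
  ((msqrt (msqrt Q * P * msqrt Q)).trace).re

/-- The matrix geometric mean `A # B = A^{1/2} √(A^{-1/2} B A^{-1/2}) A^{1/2}`. -/
noncomputable def geomMean {n : Type*} [Fintype n] [DecidableEq n]
    (A B : Matrix n n ℂ) : Matrix n n ℂ :=
  msqrt A * msqrt ((msqrt A)⁻¹ * B * (msqrt A)⁻¹) * msqrt A

/-- Partial trace over the first factor `𝒳`. -/
noncomputable def ptraceX {X Y : Type*} [Fintype X]
    (M : Matrix (X × Y) (X × Y) ℂ) : Matrix Y Y ℂ :=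
  Matrix.of fun y y' => ∑ x : X, M (x, y) (x, y')

/-!
The fidelity is the value of a semidefinite program:
`F(P, Q) = max {Re Tr X : [[P, X], [Xᴴ, Q]] ≥ 0}`.
The bound `Re Tr X ≤ F(P, Q)` comes from the `2 × 2` principal minors of the block matrix after
conjugating it into an eigenbasis of `√Q P √Q`; equality holds for `X = P G` with
`G = √Q (√Q P √Q)^{-1/2} √Q`.
Applying a map `M ↦ ∑ₖ Vₖᴴ M Vₖ` to every block keeps the block matrix positive, and keeps
`Tr X` when `∑ₖ Vₖ Vₖᴴ = 1`, so such maps can only increase the fidelity. The pinching is such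
a map and it fixes `𝐏`, which gives `F(𝐏, 𝐐) ≤ F(𝐏, 𝐐')`. So is the partial trace, so
`F(𝐏, 𝐒) ≤ F(∑ᵢ Pᵢ, Q)` whenever `Tr_𝒳 𝐒 = Q`. This bound is attained by the block-diagonal
matrix with blocks `G Pᵢ G` (for `G` optimal for `(∑ᵢ Pᵢ, Q)`, with the slack `Q - G (∑ᵢ Pᵢ) G`
added to one block): `X = ⊕ᵢ Pᵢ G` is feasible for it and `Tr X = F(∑ᵢ Pᵢ, Q)`.
-/

open scoped MatrixOrder

namespace Matrix

section Blocks

variable {k l m n : Type*}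

lemma PosSemidef.norm_sq_apply_le {M : Matrix m m ℂ} (hM : M.PosSemidef) (i j : m) :
    ‖M i j‖ ^ 2 ≤ (M i i).re * (M j j).re := by
  have hdet := (hM.submatrix ![i, j]).det_nonneg
  have hji : M j i = star (M i j) := (hM.1.apply j i).symm
  have hii := Complex.nonneg_iff.mp (hM.diag_nonneg (i := i))
  have hjj := Complex.nonneg_iff.mp (hM.diag_nonneg (i := j))
  rw [det_fin_two, Complex.nonneg_iff] at hdet
  simp only [submatrix_apply, cons_val_zero, cons_val_one, hji, Complex.sub_re, Complex.mul_re,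
    Complex.star_def, Complex.conj_re, Complex.conj_im] at hdet
  rw [← Complex.normSq_eq_norm_sq, Complex.normSq_apply]
  nlinarith [hii.2, hjj.2]

lemma PosSemidef.norm_sq_fromBlocks_apply_le {P : Matrix m m ℂ} {X : Matrix m n ℂ}
    {Q : Matrix n n ℂ} (h : (fromBlocks P X Xᴴ Q).PosSemidef) (i : m) (j : n) :
    ‖X i j‖ ^ 2 ≤ (P i i).re * (Q j j).re :=
  h.norm_sq_apply_le (.inl i) (.inr j)

lemma PosSemidef.fromBlocks_conj [Fintype k] [Fintype l] [Fintype m] [Fintype n] {P : Matrix m m ℂ} {X : Matrix m n ℂ}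
    {Q : Matrix n n ℂ} (h : (fromBlocks P X Xᴴ Q).PosSemidef) (A : Matrix k m ℂ)
    (B : Matrix l n ℂ) :
    (fromBlocks (A * P * Aᴴ) (A * X * Bᴴ) (A * X * Bᴴ)ᴴ (B * Q * Bᴴ)).PosSemidef := by
  convert h.mul_mul_conjTranspose_same (fromBlocks A 0 0 B) using 1
  simp [fromBlocks_conjTranspose, fromBlocks_multiply, Matrix.mul_assoc]

lemma PosSemidef.fromBlocks_mul_eq_zero [Fintype l] [Fintype m] [Fintype n] {P : Matrix m m ℂ}
    {X : Matrix m n ℂ} {Q : Matrix n n ℂ} (h : (fromBlocks P X Xᴴ Q).PosSemidef)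
    {B : Matrix n l ℂ} (hQB : Q * B = 0) : X * B = 0 := by
  classical
  have h' := h.fromBlocks_conj (1 : Matrix m m ℂ) Bᴴ
  rw [conjTranspose_conjTranspose, Matrix.mul_assoc Bᴴ, hQB, Matrix.mul_zero, Matrix.one_mul]
    at h'
  ext i j
  simpa using h'.norm_sq_fromBlocks_apply_le i j

lemma PosSemidef.fromBlocks_self [Fintype m] {P : Matrix m m ℂ} (hP : P.PosSemidef) :
    (fromBlocks P P Pᴴ P).PosSemidef := by
  classical
  simpa [conjTranspose_fromCols_eq_fromRows_conjTranspose, fromRows_mul_fromCols, hP.1.eq] using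
    hP.conjTranspose_mul_mul_same (fromCols (1 : Matrix m m ℂ) (1 : Matrix m m ℂ))

lemma PosSemidef.fromBlocks_mul_of_le [Fintype m] [DecidableEq m] {P G R : Matrix m m ℂ}
    (hP : P.PosSemidef) (hG : G.IsHermitian) (hR : G * P * G ≤ R) :
    (fromBlocks P (P * G) (P * G)ᴴ R).PosSemidef := by
  have hPG := hP.fromBlocks_self.fromBlocks_conj (1 : Matrix m m ℂ) G
  have hD := (le_iff.mp hR).fromBlocks_self.fromBlocks_conj (0 : Matrix m m ℂ) (1 : Matrix m m ℂ)
  simp only [hG.eq, conjTranspose_one, Matrix.one_mul, Matrix.mul_one, Matrix.zero_mul,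
    conjTranspose_zero] at hPG hD
  convert hPG.add hD using 1
  rw [fromBlocks_add]
  simp

lemma fromBlocks_sum {ι α : Type*} [AddCommMonoid α] (s : Finset ι) (A : ι → Matrix m m α)
    (B : ι → Matrix m n α) (C : ι → Matrix n m α) (D : ι → Matrix n n α) :
    fromBlocks (∑ i ∈ s, A i) (∑ i ∈ s, B i) (∑ i ∈ s, C i) (∑ i ∈ s, D i) =
      ∑ i ∈ s, fromBlocks (A i) (B i) (C i) (D i) := by
  ext (i | i) (j | j) <;> simp [Matrix.sum_apply]

end Blocks

section Sqrt

variable {m : Type*} [Fintype m] [DecidableEq m]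

lemma continuousOn_spectrum (f : ℝ → ℝ) (A : Matrix m m ℂ) : ContinuousOn f (spectrum ℝ A) :=
  A.finite_real_spectrum.continuousOn f

/-- Since `(√0)⁻¹ = 0`, this is the Moore–Penrose pseudo-inverse of `√A`, not its inverse. -/
def invSqrt (A : Matrix m m ℂ) : Matrix m m ℂ := cfc (fun x : ℝ => (√x)⁻¹) A

lemma isHermitian_invSqrt (A : Matrix m m ℂ) : (invSqrt A).IsHermitian :=
  cfc_predicate _ A

lemma invSqrt_mul_mul_invSqrt_le_one {A : Matrix m m ℂ} (hA : A.IsHermitian) :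
    invSqrt A * A * invSqrt A ≤ 1 := by
  have hc := continuousOn_spectrum (m := m)
  have e : invSqrt A * A * invSqrt A = cfc (fun x => (√x)⁻¹ * x * (√x)⁻¹) A := by
    rw [cfc_mul (fun x => (√x)⁻¹ * x) _ A (hc _ _) (hc _ _),
      cfc_mul _ (fun x => x) A (hc _ _) (hc _ _), cfc_id' ℝ A hA.isSelfAdjoint, invSqrt]
  rw [e]
  refine cfc_le_one _ A fun x _ => ?_
  rcases le_or_gt x 0 with hx | hx
  · simp [Real.sqrt_eq_zero'.mpr hx]
  · rw [mul_inv_le_iff₀ (by positivity), one_mul, inv_mul_le_iff₀ (by positivity),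
      Real.mul_self_sqrt hx.le]

lemma msqrt_eq_cfc {A : Matrix m m ℂ} (hA : A.PosSemidef) : msqrt A = cfc Real.sqrt A := by
  rw [hA.1.cfc_eq, msqrt, dif_pos hA]
  rfl

lemma isHermitian_msqrt {A : Matrix m m ℂ} (hA : A.PosSemidef) : (msqrt A).IsHermitian := by
  rw [msqrt_eq_cfc hA]
  exact cfc_predicate _ A

lemma msqrt_mul_self {A : Matrix m m ℂ} (hA : A.PosSemidef) : msqrt A * msqrt A = A := by
  have hc := continuousOn_spectrum (m := m)
  rw [msqrt_eq_cfc hA, ← cfc_mul _ _ A (hc _ _) (hc _ _)]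
  conv_rhs => rw [← cfc_id' ℝ A hA.1.isSelfAdjoint]
  exact cfc_congr fun x hx => Real.mul_self_sqrt (spectrum_nonneg_of_nonneg hA.nonneg hx)

lemma mul_invSqrt {A : Matrix m m ℂ} (hA : A.PosSemidef) : A * invSqrt A = msqrt A := by
  have hc := continuousOn_spectrum (m := m)
  calc A * invSqrt A = cfc (fun x => x * (√x)⁻¹) A := by
        rw [cfc_mul (fun x => x) _ A (hc _ _) (hc _ _), cfc_id' ℝ A hA.1.isSelfAdjoint, invSqrt]
    _ = cfc Real.sqrt A := cfc_congr fun x _ => (div_eq_mul_inv x √x).symm.trans Real.div_sqrt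
    _ = msqrt A := (msqrt_eq_cfc hA).symm

lemma msqrt_mul_invSqrt_mul_msqrt {A : Matrix m m ℂ} (hA : A.PosSemidef) :
    msqrt A * invSqrt A * msqrt A = msqrt A := by
  have hc := continuousOn_spectrum (m := m)
  rw [msqrt_eq_cfc hA, invSqrt, ← cfc_mul _ _ A (hc _ _) (hc _ _),
    ← cfc_mul (fun x => √x * (√x)⁻¹) _ A (hc _ _) (hc _ _)]
  refine cfc_congr fun x _ => ?_
  rcases eq_or_ne (√x) 0 with hx | hx
  · simp [hx]
  · field_simp

lemma trace_msqrt {A : Matrix m m ℂ} (hA : A.PosSemidef) :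
    (msqrt A).trace = ∑ j, (√(hA.1.eigenvalues j) : ℂ) := by
  rw [msqrt, dif_pos hA, trace_mul_cycle, Unitary.coe_star_mul_self, Matrix.one_mul,
    trace_diagonal]
  rfl

lemma IsHermitian.conjTranspose_eigenvectorUnitary_mul_mul {A : Matrix m m ℂ}
    (hA : A.IsHermitian) :
    (hA.eigenvectorUnitary : Matrix m m ℂ)ᴴ * A * hA.eigenvectorUnitary =
      diagonal fun j => (hA.eigenvalues j : ℂ) := by
  have := hA.conjStarAlgAut_star_eigenvectorUnitary
  rw [Unitary.conjStarAlgAut_star_apply] at this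
  exact this

end Sqrt

lemma re_trace_le_sum_sqrt_of_fromBlocks {m : Type*} [Fintype m] [DecidableEq m] {d : m → ℝ}
    {X B : Matrix m m ℂ} (h : (fromBlocks (diagonal fun j => (d j : ℂ)) X Xᴴ B).PosSemidef)
    (hB : B ≤ 1) : X.trace.re ≤ ∑ j, √(d j) := by
  rw [trace, Complex.re_sum]
  refine Finset.sum_le_sum fun j _ => (Complex.re_le_norm _).trans ?_
  have hX := h.norm_sq_fromBlocks_apply_le j j
  have hd : 0 ≤ d j := by simpa using h.diag_nonneg (i := .inl j)
  have hB0 : 0 ≤ (B j j).re := by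
    simpa using (Complex.nonneg_iff.mp (h.diag_nonneg (i := .inr j))).1
  have hB1 : (B j j).re ≤ 1 := by
    simpa using (Complex.nonneg_iff.mp ((le_iff.mp hB).diag_nonneg (i := j))).1
  simp only [diagonal_apply_eq, Complex.ofReal_re] at hX
  rw [diag_apply, ← abs_norm]
  exact Real.abs_le_sqrt (by nlinarith)

end Matrix

section FidelitySDP

variable {m : Type*} [Fintype m] [DecidableEq m]

theorem re_trace_le_fidelity {P Q X : Matrix m m ℂ} (hP : P.PosSemidef) (hQ : Q.PosSemidef)
    (h : (fromBlocks P X Xᴴ Q).PosSemidef) : X.trace.re ≤ fidelity P Q := by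
  set T := msqrt Q
  set T' := invSqrt Q
  have hT : Tᴴ = T := isHermitian_msqrt hQ
  have hT' : T'ᴴ = T' := isHermitian_invSqrt Q
  have hN : (T * P * T).PosSemidef := by simpa [hT] using hP.conjTranspose_mul_mul_same T
  have hfid : fidelity P Q = ∑ j, √(hN.1.eigenvalues j) := by
    rw [fidelity, trace_msqrt hN, Complex.re_sum]
    rfl
  have hPd := hN.1.conjTranspose_eigenvectorUnitary_mul_mul
  have hU := hN.1.eigenvectorUnitary.2
  generalize (hN.1.eigenvectorUnitary : Matrix m m ℂ) = U at hPd hU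
  -- `X` vanishes on the kernel of `Q`, off which `T' * T` is the identity
  have hX : X * (T' * T) = X := by
    have hQ0 : Q * (1 - T' * T) = 0 := by
      rw [← msqrt_mul_self hQ, Matrix.mul_sub, Matrix.mul_one, Matrix.mul_assoc,
        ← Matrix.mul_assoc T T' T, msqrt_mul_invSqrt_mul_msqrt hQ, sub_self]
    have := h.fromBlocks_mul_eq_zero hQ0
    rwa [Matrix.mul_sub, Matrix.mul_one, sub_eq_zero, eq_comm] at this
  have hblock := h.fromBlocks_conj (Uᴴ * T) (Uᴴ * T')
  rw [conjTranspose_mul, conjTranspose_mul, hT, hT', conjTranspose_conjTranspose,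
    show Uᴴ * T * P * (T * U) = Uᴴ * (T * P * T) * U by simp only [Matrix.mul_assoc], hPd]
    at hblock
  have hQle : Uᴴ * T' * Q * (T' * U) ≤ 1 := by
    calc _ = star U * (T' * Q * T') * U := by simp only [star_eq_conjTranspose, Matrix.mul_assoc]
      _ ≤ star U * 1 * U :=
        star_left_conjugate_le_conjugate (invSqrt_mul_mul_invSqrt_le_one hQ.1) _
      _ = 1 := by rw [Matrix.mul_one, Unitary.star_mul_self_of_mem hU]
  have htr : (Uᴴ * T * X * (T' * U)).trace = X.trace := by
    calc _ = (star U * (T * (X * T')) * U).trace := by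
          simp only [star_eq_conjTranspose, Matrix.mul_assoc]
      _ = (X * (T' * T)).trace := by
        rw [trace_mul_cycle, Unitary.mul_star_self_of_mem hU, Matrix.one_mul, trace_mul_comm,
          Matrix.mul_assoc]
      _ = X.trace := by rw [hX]
  calc X.trace.re = (Uᴴ * T * X * (T' * U)).trace.re := by rw [htr]
    _ ≤ ∑ j, √(hN.1.eigenvalues j) := re_trace_le_sum_sqrt_of_fromBlocks hblock hQle
    _ = fidelity P Q := hfid.symm

theorem exists_re_trace_mul_eq_fidelity {P Q : Matrix m m ℂ} (hP : P.PosSemidef)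
    (hQ : Q.PosSemidef) :
    ∃ G : Matrix m m ℂ, G.IsHermitian ∧ G * P * G ≤ Q ∧ (P * G).trace.re = fidelity P Q := by
  set T := msqrt Q
  have hT : Tᴴ = T := isHermitian_msqrt hQ
  have hN : (T * P * T).PosSemidef := by simpa [hT] using hP.conjTranspose_mul_mul_same T
  set S := invSqrt (T * P * T)
  refine ⟨T * S * T, ?_, ?_, ?_⟩
  · have := isHermitian_conjTranspose_mul_mul T (isHermitian_invSqrt (T * P * T))
    rwa [hT] at this
  · calc T * S * T * P * (T * S * T) = star T * (S * (T * P * T) * S) * T := by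
          simp only [star_eq_conjTranspose, hT, Matrix.mul_assoc]
      _ ≤ star T * 1 * T :=
        star_left_conjugate_le_conjugate (invSqrt_mul_mul_invSqrt_le_one hN.1) T
      _ = Q := by rw [Matrix.mul_one, star_eq_conjTranspose, hT, msqrt_mul_self hQ]
  · rw [fidelity, ← mul_invSqrt hN,
      show P * (T * S * T) = P * T * S * T by simp only [Matrix.mul_assoc], trace_mul_comm]
    simp only [S, Matrix.mul_assoc]

theorem exists_fromBlocks_re_trace_eq_fidelity {P Q : Matrix m m ℂ} (hP : P.PosSemidef)
    (hQ : Q.PosSemidef) :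
    ∃ X : Matrix m m ℂ, (fromBlocks P X Xᴴ Q).PosSemidef ∧ X.trace.re = fidelity P Q :=
  let ⟨G, hG, hGQ, htr⟩ := exists_re_trace_mul_eq_fidelity hP hQ
  ⟨P * G, hP.fromBlocks_mul_of_le hG hGQ, htr⟩

end FidelitySDP

namespace Matrix

section KrausMap

variable {ι a b : Type*} [Fintype ι] [Fintype a] [Fintype b]

def krausMap (V : ι → Matrix a b ℂ) (M : Matrix a a ℂ) : Matrix b b ℂ :=
  ∑ k, (V k)ᴴ * M * V k

lemma PosSemidef.krausMap {M : Matrix a a ℂ} (hM : M.PosSemidef) (V : ι → Matrix a b ℂ) :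
    (Matrix.krausMap V M).PosSemidef :=
  posSemidef_sum _ fun k _ => hM.conjTranspose_mul_mul_same (V k)

lemma PosSemidef.fromBlocks_krausMap {P X Q : Matrix a a ℂ}
    (h : (fromBlocks P X Xᴴ Q).PosSemidef) (V : ι → Matrix a b ℂ) :
    (fromBlocks (Matrix.krausMap V P) (Matrix.krausMap V X) (Matrix.krausMap V X)ᴴ
      (Matrix.krausMap V Q)).PosSemidef := by
  have hk k := h.fromBlocks_conj (V k)ᴴ (V k)ᴴ
  simp only [conjTranspose_conjTranspose] at hk
  simp only [Matrix.krausMap, conjTranspose_sum]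
  rw [fromBlocks_sum]
  exact posSemidef_sum _ fun k _ => hk k

lemma trace_krausMap [DecidableEq a] {V : ι → Matrix a b ℂ} (hV : ∑ k, V k * (V k)ᴴ = 1)
    (M : Matrix a a ℂ) : (krausMap V M).trace = M.trace := by
  simp_rw [krausMap, trace_sum, trace_mul_cycle _ M, ← trace_sum, ← Finset.sum_mul, hV,
    Matrix.one_mul]

end KrausMap

end Matrix

theorem fidelity_le_fidelity_krausMap {ι a b : Type*} [Fintype ι] [Fintype a] [DecidableEq a]
    [Fintype b] [DecidableEq b] {V : ι → Matrix a b ℂ} (hV : ∑ k, V k * (V k)ᴴ = 1)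
    {P Q : Matrix a a ℂ} (hP : P.PosSemidef) (hQ : Q.PosSemidef) :
    fidelity P Q ≤ fidelity (krausMap V P) (krausMap V Q) := by
  obtain ⟨X, hX, hXF⟩ := exists_fromBlocks_re_trace_eq_fidelity hP hQ
  rw [← hXF, ← trace_krausMap hV X]
  exact re_trace_le_fidelity (hP.krausMap V) (hQ.krausMap V) (hX.fromBlocks_krausMap V)

namespace Matrix

section BlockMatrices

variable {α β : Type*} [DecidableEq α] [DecidableEq β]

def blockInclusion (β : Type*) [DecidableEq β] (k : α) : Matrix (α × β) β ℂ :=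
  of fun p y => if p = (k, y) then 1 else 0

lemma blockInclusion_mul_mul_conjTranspose_apply [Fintype β] (A : Matrix β β ℂ) (k : α)
    (p q : α × β) :
    (blockInclusion β k * A * (blockInclusion β k)ᴴ) p q =
      if p.1 = k ∧ q.1 = k then A p.2 q.2 else 0 := by
  obtain ⟨i, y⟩ := p
  obtain ⟨j, y'⟩ := q
  by_cases hi : i = k <;> by_cases hj : j = k <;>
    simp [hi, hj, blockInclusion, mul_apply, conjTranspose_apply]

variable [Fintype α] [Fintype β]

lemma conjTranspose_blockInclusion_mul_mul_apply (M : Matrix (α × β) (α × β) ℂ) (k : α)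
    (y y' : β) : ((blockInclusion β k)ᴴ * M * blockInclusion β k) y y' = M (k, y) (k, y') := by
  simp [blockInclusion, mul_apply, conjTranspose_apply]

lemma conjTranspose_blockInclusion_mul_self (k : α) :
    (blockInclusion β k)ᴴ * blockInclusion β k = (1 : Matrix β β ℂ) := by
  ext y y'
  simpa [one_apply] using conjTranspose_blockInclusion_mul_mul_apply 1 k y y'

lemma sum_blockInclusion_mul_conjTranspose :
    ∑ k, blockInclusion β k * (blockInclusion β k)ᴴ = (1 : Matrix (α × β) (α × β) ℂ) := by
  ext p q
  have hk k := blockInclusion_mul_mul_conjTranspose_apply (1 : Matrix β β ℂ) k p q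
  simp only [Matrix.mul_one] at hk
  simp only [Matrix.sum_apply, hk, ite_and, Finset.sum_ite_eq, Finset.mem_univ, if_true]
  rcases eq_or_ne p.1 q.1 with h | h
  · simp [one_apply, h, Prod.ext_iff]
  · simp [h, h.symm, Prod.ext_iff]

lemma ptraceX_eq_krausMap (M : Matrix (α × β) (α × β) ℂ) :
    ptraceX M = krausMap (blockInclusion β) M := by
  ext y y'
  simp [ptraceX, krausMap, Matrix.sum_apply, conjTranspose_blockInclusion_mul_mul_apply]

/-- Unlike `Matrix.blockDiagonal`, the block index comes first, as in `ptraceX`. -/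
def blockDiagonalFst (A : α → Matrix β β ℂ) : Matrix (α × β) (α × β) ℂ :=
  ∑ k, blockInclusion β k * A k * (blockInclusion β k)ᴴ

lemma blockDiagonalFst_apply (A : α → Matrix β β ℂ) (p q : α × β) :
    blockDiagonalFst A p q = if p.1 = q.1 then A p.1 p.2 q.2 else 0 := by
  simp only [blockDiagonalFst, Matrix.sum_apply, blockInclusion_mul_mul_conjTranspose_apply,
    ite_and, Finset.sum_ite_eq, Finset.mem_univ, if_true]
  rcases eq_or_ne p.1 q.1 with h | h
  · simp [h]
  · simp [h, h.symm]

lemma PosSemidef.blockDiagonalFst {A : α → Matrix β β ℂ} (hA : ∀ k, (A k).PosSemidef) :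
    (Matrix.blockDiagonalFst A).PosSemidef :=
  posSemidef_sum _ fun k _ => (hA k).mul_mul_conjTranspose_same _

lemma PosSemidef.fromBlocks_blockDiagonalFst {A B C : α → Matrix β β ℂ}
    (h : ∀ k, (fromBlocks (A k) (B k) (B k)ᴴ (C k)).PosSemidef) :
    (fromBlocks (Matrix.blockDiagonalFst A) (Matrix.blockDiagonalFst B)
      (Matrix.blockDiagonalFst B)ᴴ (Matrix.blockDiagonalFst C)).PosSemidef := by
  have hk k := (h k).fromBlocks_conj (blockInclusion β k) (blockInclusion β k)
  simp only [Matrix.blockDiagonalFst, conjTranspose_sum]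
  rw [fromBlocks_sum]
  exact posSemidef_sum _ fun k _ => hk k

lemma trace_blockDiagonalFst (A : α → Matrix β β ℂ) :
    (blockDiagonalFst A).trace = ∑ k, (A k).trace := by
  refine (trace_sum _ _).trans (Finset.sum_congr rfl fun k _ => ?_)
  rw [trace_mul_cycle, conjTranspose_blockInclusion_mul_self, Matrix.one_mul]

lemma ptraceX_blockDiagonalFst (A : α → Matrix β β ℂ) :
    ptraceX (blockDiagonalFst A) = ∑ k, A k := by
  ext y y'
  simp [ptraceX, blockDiagonalFst_apply, Matrix.sum_apply]

def pinching (M : Matrix (α × β) (α × β) ℂ) : Matrix (α × β) (α × β) ℂ :=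
  krausMap (fun k => blockInclusion β k * (blockInclusion β k)ᴴ) M

lemma pinching_apply (M : Matrix (α × β) (α × β) ℂ) (p q : α × β) :
    pinching M p q = if p.1 = q.1 then M p q else 0 := by
  have h : pinching M =
      blockDiagonalFst fun k => (blockInclusion β k)ᴴ * M * blockInclusion β k := by
    simp only [pinching, krausMap, blockDiagonalFst, conjTranspose_mul,
      conjTranspose_conjTranspose, Matrix.mul_assoc]
  rw [h, blockDiagonalFst_apply, conjTranspose_blockInclusion_mul_mul_apply]
  split_ifs with hpq
  · rw [show q = (p.1, q.2) from Prod.ext hpq.symm rfl]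
  · rfl

lemma pinching_blockDiagonalFst (A : α → Matrix β β ℂ) :
    pinching (blockDiagonalFst A) = blockDiagonalFst A := by
  ext p q
  rw [pinching_apply, blockDiagonalFst_apply]
  split_ifs <;> rfl

lemma ptraceX_pinching (M : Matrix (α × β) (α × β) ℂ) : ptraceX (pinching M) = ptraceX M := by
  ext y y'
  simp [ptraceX, pinching_apply]

end BlockMatrices

end Matrix

section BlockFidelity

variable {α β : Type*} [Fintype α] [DecidableEq α] [Fintype β] [DecidableEq β]

theorem fidelity_le_fidelity_ptraceX {P Q : Matrix (α × β) (α × β) ℂ} (hP : P.PosSemidef)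
    (hQ : Q.PosSemidef) : fidelity P Q ≤ fidelity (ptraceX P) (ptraceX Q) := by
  rw [ptraceX_eq_krausMap, ptraceX_eq_krausMap]
  exact fidelity_le_fidelity_krausMap sum_blockInclusion_mul_conjTranspose hP hQ

theorem fidelity_le_fidelity_pinching {P Q : Matrix (α × β) (α × β) ℂ} (hP : P.PosSemidef)
    (hQ : Q.PosSemidef) : fidelity P Q ≤ fidelity (pinching P) (pinching Q) := by
  refine fidelity_le_fidelity_krausMap ?_ hP hQ
  simp_rw [conjTranspose_mul, conjTranspose_conjTranspose, Matrix.mul_assoc,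
    ← Matrix.mul_assoc _ (blockInclusion β _), conjTranspose_blockInclusion_mul_self,
    Matrix.one_mul]
  exact sum_blockInclusion_mul_conjTranspose

theorem exists_fidelity_blockDiagonalFst_ge [Nonempty α] {A : α → Matrix β β ℂ}
    (hA : ∀ k, (A k).PosSemidef) {Q : Matrix β β ℂ} (hQ : Q.PosSemidef) :
    ∃ B : α → Matrix β β ℂ, (∀ k, (B k).PosSemidef) ∧ ∑ k, B k = Q ∧
      fidelity (∑ k, A k) Q ≤ fidelity (blockDiagonalFst A) (blockDiagonalFst B) := by
  obtain ⟨G, hG, hGQ, hF⟩ :=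
    exists_re_trace_mul_eq_fidelity (posSemidef_sum _ fun k _ => hA k) hQ
  obtain ⟨k₀⟩ := ‹Nonempty α›
  set B := fun k => G * A k * G + if k = k₀ then Q - G * (∑ k, A k) * G else 0
  have hGA k : 0 ≤ G * A k * G := by
    simpa [hG.eq, nonneg_iff_posSemidef] using (hA k).conjTranspose_mul_mul_same G
  have hB k : G * A k * G ≤ B k := by
    rw [le_add_iff_nonneg_right]
    split_ifs
    · exact sub_nonneg.mpr hGQ
    · exact le_rfl
  have hBpsd k : (B k).PosSemidef := nonneg_iff_posSemidef.mp ((hGA k).trans (hB k))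
  refine ⟨B, hBpsd, ?_, ?_⟩
  · simp only [B, Finset.sum_add_distrib, Finset.sum_ite_eq', Finset.mem_univ, if_true,
      ← Finset.sum_mul, ← Finset.mul_sum, add_sub_cancel]
  · calc fidelity (∑ k, A k) Q = (blockDiagonalFst fun k => A k * G).trace.re := by
          rw [← hF, trace_blockDiagonalFst, Finset.sum_mul, trace_sum]
      _ ≤ fidelity (blockDiagonalFst A) (blockDiagonalFst B) :=
        re_trace_le_fidelity (.blockDiagonalFst hA) (.blockDiagonalFst hBpsd)
          (.fromBlocks_blockDiagonalFst fun k => (hA k).fromBlocks_mul_of_le hG (hB k))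

end BlockFidelity

/-- Let `𝐏 = ∑ i, |i⟩⟨i| ⊗ Pt i` be block-diagonal with PSD blocks,
`Q` PSD on `𝒴`, and `𝐐` any PSD matrix on `𝒳⊗𝒴` with `Tr_𝒳[𝐐] = Q`. Then the
block-diagonal pinching `𝐐'` of `𝐐` again satisfies `Tr_𝒳[𝐐'] = Q` and
`F(𝐏,𝐐) ≤ F(𝐏,𝐐')`; consequently the supremum of `F(𝐏,·)` over
`{𝐐 PSD : Tr_𝒳[𝐐] = Q}` is attained at a block-diagonal matrix. -/
theorem block_diagonal_projection
    {n : ℕ} {Y : Type*} [Fintype Y] [DecidableEq Y]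
    (Pt : Fin n → Matrix Y Y ℂ) (hPt : ∀ i, (Pt i).PosSemidef)
    (PP : Matrix (Fin n × Y) (Fin n × Y) ℂ)
    (hPP : ∀ p q, PP p q = if p.1 = q.1 then Pt p.1 p.2 q.2 else 0)
    (Q : Matrix Y Y ℂ) (hQ : Q.PosSemidef)
    (QQ : Matrix (Fin n × Y) (Fin n × Y) ℂ) (hQQ : QQ.PosSemidef)
    (hQQm : ptraceX QQ = Q)
    (QQ' : Matrix (Fin n × Y) (Fin n × Y) ℂ)
    (hQQ' : ∀ p q, QQ' p q = if p.1 = q.1 then QQ p q else 0) :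
    ptraceX QQ' = Q ∧ fidelity PP QQ ≤ fidelity PP QQ' ∧
    ∃ R : Matrix (Fin n × Y) (Fin n × Y) ℂ,
      R.PosSemidef ∧ ptraceX R = Q ∧ (∀ p q, p.1 ≠ q.1 → R p q = 0) ∧
      ∀ S : Matrix (Fin n × Y) (Fin n × Y) ℂ, S.PosSemidef → ptraceX S = Q →
        fidelity PP S ≤ fidelity PP R := by
  have hPP_eq : PP = blockDiagonalFst Pt := by
    ext p q
    rw [hPP, blockDiagonalFst_apply]
  have hQQ'_eq : QQ' = pinching QQ := by
    ext p q
    rw [hQQ', pinching_apply]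
  have hPP_psd : PP.PosSemidef := hPP_eq ▸ .blockDiagonalFst hPt
  have hQQ'_trace : ptraceX QQ' = Q := by rw [hQQ'_eq, ptraceX_pinching, hQQm]
  refine ⟨hQQ'_trace, ?_, ?_⟩
  · simpa only [← hQQ'_eq, hPP_eq, pinching_blockDiagonalFst] using
      fidelity_le_fidelity_pinching hPP_psd hQQ
  rcases isEmpty_or_nonempty (Fin n) with hn | hn
  · refine ⟨QQ', hQQ'_eq ▸ hQQ.krausMap _, hQQ'_trace, fun p => isEmptyElim p.1, fun S _ _ => ?_⟩
    rw [Subsingleton.elim S QQ']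
  obtain ⟨B, hB, hBQ, hF⟩ := exists_fidelity_blockDiagonalFst_ge hPt hQ
  refine ⟨blockDiagonalFst B, .blockDiagonalFst hB, by rw [ptraceX_blockDiagonalFst, hBQ],
    fun p q hpq => by rw [blockDiagonalFst_apply, if_neg hpq], fun S hS hSQ => ?_⟩
  calc fidelity PP S ≤ fidelity (ptraceX PP) (ptraceX S) :=
        fidelity_le_fidelity_ptraceX hPP_psd hS
    _ = fidelity (∑ i, Pt i) Q := by rw [hPP_eq, ptraceX_blockDiagonalFst, hSQ]
    _ ≤ fidelity PP (blockDiagonalFst B) := hPP_eq ▸ hF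
end
end

section
/- Let Θ and Ξ be completely positive maps from matrices over 𝒳 to matrices over 𝒴 (i.e., their Choi matrices 𝔠(Θ), 𝔠(Ξ) are PSD), let r ≥ max{rank(𝔠(Θ)), rank(𝔠(Ξ))}, set 𝒵 = ℂ^r, and let K, L ∈ M_{𝒳, 𝒴⊗𝒵} be Stinespring operators of Θ and Ξ respectively, i.e., Tr_𝒵[K X K†] = Θ(X) and Tr_𝒵[L X L†] = Ξ(X) for all X. Then B(𝔠(Θ), 𝔠(Ξ)) = min over unitaries U on 𝒵 of ‖K − (I_𝒴 ⊗ U) L‖_F², where ‖·‖_F is the Frobenius norm. In other words, the Choi–Bures distance between two CP maps equals their Stinespring–Frobenius distance. -/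
open Matrix Kronecker
open scoped ComplexOrder

noncomputable section

/-- The Choi matrix of a map `Φ` from matrices over `𝒳` to matrices over `𝒴`:
`𝔠(Φ) = ∑ i j, |i⟩⟨j| ⊗ Φ(|i⟩⟨j|)`. -/
noncomputable def choi {X Y : Type*} [DecidableEq X]
    (Φ : Matrix X X ℂ → Matrix Y Y ℂ) : Matrix (X × Y) (X × Y) ℂ :=
  Matrix.of fun p q => Φ (Matrix.single p.1 q.1 1) p.2 q.2

/-- Partial trace over the auxiliary second factor `𝒵`. -/
noncomputable def ptraceAux {Y Z : Type*} [Fintype Z]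
    (M : Matrix (Y × Z) (Y × Z) ℂ) : Matrix Y Y ℂ :=
  Matrix.of fun y y' => ∑ z : Z, M (y, z) (y', z)

/-- The squared Bures distance `B(P,Q) = Tr P + Tr Q − 2 F(P,Q)`. -/
noncomputable def buresSq {n : Type*} [Fintype n] [DecidableEq n]
    (P Q : Matrix n n ℂ) : ℝ :=
  P.trace.re + Q.trace.re - 2 * fidelity P Q

/-!
Reshaping a Stinespring operator `K : 𝒳 → 𝒴 ⊗ 𝒵` into `F_K : (𝒳 × 𝒴) × 𝒵` turns the
partial-trace condition into `𝔠(Θ) = F_K F_K†`, and `‖K − (I ⊗ U) L‖_F = ‖F_K − F_L Uᵀ‖_F`.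
Expanding the square, the theorem becomes `F(A A†, B B†) = Tr |A† B| = max_V Re Tr(A† B V)`
over unitaries `V`. Both equalities come from the polar decomposition `M = W |M|`: it gives
`Tr √(M† M) = Tr √(M M†)`, which identifies the fidelity, and it reduces the maximum to
`Re Tr(|M| V) ≤ Tr |M|`, which holds for every positive semidefinite matrix.
-/

open scoped InnerProductSpace MatrixOrder

section SquareRoot

variable {m n : Type*} [Fintype m] [DecidableEq m] [Fintype n] [DecidableEq n]

lemma msqrt_eq_cfcSqrt {A : Matrix n n ℂ} (hA : A.PosSemidef) : msqrt A = CFC.sqrt A := by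
  rw [msqrt, dif_pos hA, CFC.sqrt_eq_cfc, cfc_nnreal_eq_real _ A hA.nonneg, hA.1.cfc_eq]
  simp only [IsHermitian.cfc, Unitary.conjStarAlgAut_apply]
  congr 3
  funext i
  simp [max_eq_left (hA.eigenvalues_nonneg i)]

lemma posSemidef_msqrt {A : Matrix n n ℂ} (hA : A.PosSemidef) : (msqrt A).PosSemidef := by
  rw [msqrt_eq_cfcSqrt hA]
  exact nonneg_iff_posSemidef.mp (CFC.sqrt_nonneg A)

lemma conjTranspose_msqrt {A : Matrix n n ℂ} (hA : A.PosSemidef) : (msqrt A)ᴴ = msqrt A :=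
  (posSemidef_msqrt hA).isHermitian

lemma msqrt_mul_msqrt {A : Matrix n n ℂ} (hA : A.PosSemidef) : msqrt A * msqrt A = A := by
  rw [msqrt_eq_cfcSqrt hA]
  exact CFC.sqrt_mul_sqrt_self A hA.nonneg

lemma msqrt_unique {A B : Matrix n n ℂ} (hA : A.PosSemidef) (hB : B.PosSemidef)
    (h : B * B = A) : msqrt A = B := by
  rw [msqrt_eq_cfcSqrt hA]
  exact CFC.sqrt_unique h hB.nonneg

lemma msqrt_zero : msqrt (0 : Matrix n n ℂ) = 0 :=
  msqrt_unique .zero .zero (Matrix.mul_zero 0)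

lemma msqrt_mul_mul_conjTranspose {A : Matrix n n ℂ} {W : Matrix m n ℂ} (hA : A.PosSemidef)
    (hW : Wᴴ * W = 1) : msqrt (W * A * Wᴴ) = W * msqrt A * Wᴴ := by
  refine msqrt_unique (hA.mul_mul_conjTranspose_same W)
    ((posSemidef_msqrt hA).mul_mul_conjTranspose_same W) ?_
  calc W * msqrt A * Wᴴ * (W * msqrt A * Wᴴ) = W * msqrt A * (Wᴴ * W) * msqrt A * Wᴴ := by
        simp only [Matrix.mul_assoc]
    _ = W * A * Wᴴ := by rw [hW, Matrix.mul_one, Matrix.mul_assoc W, msqrt_mul_msqrt hA]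

lemma posSemidef_fromBlocks_zero {A : Matrix m m ℂ} {B : Matrix n n ℂ}
    (hA : A.PosSemidef) (hB : B.PosSemidef) : (fromBlocks A 0 0 B).PosSemidef := by
  have h : fromBlocks A 0 0 B =
      (fromBlocks (msqrt A) 0 0 (msqrt B))ᴴ * fromBlocks (msqrt A) 0 0 (msqrt B) := by
    simp [fromBlocks_conjTranspose, fromBlocks_multiply, conjTranspose_msqrt, msqrt_mul_msqrt,
      hA, hB]
  rw [h]
  exact posSemidef_conjTranspose_mul_self _

lemma msqrt_fromBlocks_zero {A : Matrix m m ℂ} {B : Matrix n n ℂ}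
    (hA : A.PosSemidef) (hB : B.PosSemidef) :
    msqrt (fromBlocks A 0 0 B) = fromBlocks (msqrt A) 0 0 (msqrt B) :=
  msqrt_unique (posSemidef_fromBlocks_zero hA hB)
    (posSemidef_fromBlocks_zero (posSemidef_msqrt hA) (posSemidef_msqrt hB))
    (by simp [fromBlocks_multiply, msqrt_mul_msqrt, hA, hB])

end SquareRoot

section LinearIsometry

variable {𝕜 V W : Type*} [RCLike 𝕜] [NormedAddCommGroup V] [InnerProductSpace 𝕜 V]
  [FiniteDimensional 𝕜 V] [AddCommGroup W] [Module 𝕜 W]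

/-- `g w ↦ f w` is a well-defined isometry on the range of `g`; extend it to all of `V`. -/
theorem LinearMap.exists_linearIsometry_comp_eq_of_norm_eq (f g : W →ₗ[𝕜] V)
    (h : ∀ w, ‖f w‖ = ‖g w‖) : ∃ T : V →ₗᵢ[𝕜] V, ∀ w, T (g w) = f w := by
  have hker : LinearMap.ker g ≤ LinearMap.ker f := fun w hw => by
    rw [LinearMap.mem_ker, ← norm_eq_zero, h, norm_eq_zero, ← LinearMap.mem_ker]
    exact hw
  let T₀ : LinearMap.range g →ₗ[𝕜] V :=
    (LinearMap.ker g).liftQ f hker ∘ₗ g.quotKerEquivRange.symm.toLinearMap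
  have hT₀ : ∀ w, T₀ ⟨g w, LinearMap.mem_range_self g w⟩ = f w := fun w => by
    simp [T₀, g.quotKerEquivRange_symm_apply_image w (LinearMap.mem_range_self g w)]
  let T₁ : LinearMap.range g →ₗᵢ[𝕜] V :=
    { toLinearMap := T₀
      norm_map' := by
        rintro ⟨_, w, rfl⟩
        rw [hT₀, h]
        rfl }
  exact ⟨T₁.extend, fun w => (T₁.extend_apply ⟨g w, _⟩).trans (hT₀ w)⟩

end LinearIsometry

section Polar

variable {n : Type*} [Fintype n] [DecidableEq n]

lemma norm_toEuclideanLin_eq_of_conjTranspose_mul_self_eq {m : Type*} [Fintype m]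
    [DecidableEq m] {M N : Matrix m n ℂ} (h : Mᴴ * M = Nᴴ * N) (v : EuclideanSpace ℂ n) :
    ‖toEuclideanLin M v‖ = ‖toEuclideanLin N v‖ := by
  have key : ∀ P : Matrix m n ℂ,
      ‖toEuclideanLin P v‖ ^ 2 = RCLike.re ⟪v, toEuclideanLin (Pᴴ * P) v⟫_ℂ := fun P => by
    rw [@norm_sq_eq_re_inner ℂ, toLpLin_mul (q := 2), LinearMap.comp_apply,
      toEuclideanLin_conjTranspose_eq_adjoint, LinearMap.adjoint_inner_right]
  rw [← sq_eq_sq₀ (norm_nonneg _) (norm_nonneg _), key, key, h]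

lemma toEuclideanLin_symm_mem_unitaryGroup
    (T : EuclideanSpace ℂ n →ₗᵢ[ℂ] EuclideanSpace ℂ n) :
    toEuclideanLin.symm T.toLinearMap ∈ unitaryGroup n ℂ := by
  rw [mem_unitaryGroup_iff', star_eq_conjTranspose]
  apply toEuclideanLin.injective
  rw [toLpLin_mul (q := 2), toEuclideanLin_conjTranspose_eq_adjoint,
    LinearEquiv.apply_symm_apply, T.adjoint_comp_self']
  ext; simp

theorem exists_unitary_mul_msqrt_eq (M : Matrix n n ℂ) :
    ∃ W ∈ unitaryGroup n ℂ, W * msqrt (Mᴴ * M) = M := by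
  have hMM := posSemidef_conjTranspose_mul_self M
  obtain ⟨T, hT⟩ := (toEuclideanLin M).exists_linearIsometry_comp_eq_of_norm_eq
    (toEuclideanLin (msqrt (Mᴴ * M))) (norm_toEuclideanLin_eq_of_conjTranspose_mul_self_eq
      (by rw [conjTranspose_msqrt hMM, msqrt_mul_msqrt hMM]))
  refine ⟨_, toEuclideanLin_symm_mem_unitaryGroup T, toEuclideanLin.injective ?_⟩
  rw [toLpLin_mul (q := 2), LinearEquiv.apply_symm_apply]
  exact LinearMap.ext hT

end Polar

section Trace

variable {m n : Type*} [Fintype m] [Fintype n]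

lemma trace_fromBlocks (A : Matrix m m ℂ) (B : Matrix m n ℂ) (C : Matrix n m ℂ)
    (D : Matrix n n ℂ) : (fromBlocks A B C D).trace = A.trace + D.trace := by
  simp [trace, Fintype.sum_sum_type]

lemma re_trace_conjTranspose_sub_mul_sub (P Q : Matrix m n ℂ) :
    ((P - Q)ᴴ * (P - Q)).trace.re =
      (Pᴴ * P).trace.re + (Qᴴ * Q).trace.re - 2 * (Pᴴ * Q).trace.re := by
  have hswap : (Qᴴ * P).trace = star (Pᴴ * Q).trace := by
    rw [← trace_conjTranspose, conjTranspose_mul, conjTranspose_conjTranspose]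
  simp only [conjTranspose_sub, Matrix.sub_mul, Matrix.mul_sub, trace_sub, Complex.sub_re, hswap,
    Complex.star_def, Complex.conj_re]
  ring

lemma re_trace_conjTranspose_mul_self (D : Matrix m n ℂ) :
    (Dᴴ * D).trace.re = ∑ i, ∑ j, Complex.normSq (D i j) := by
  simp only [trace, diag, mul_apply, conjTranspose_apply, Complex.re_sum]
  rw [Finset.sum_comm]
  simp [Complex.normSq_apply]

variable [DecidableEq m] [DecidableEq n]

lemma trace_msqrt_conjTranspose_mul_self_of_square (M : Matrix n n ℂ) :
    (msqrt (Mᴴ * M)).trace = (msqrt (M * Mᴴ)).trace := by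
  obtain ⟨W, hW, hWM⟩ := exists_unitary_mul_msqrt_eq M
  have hMM := posSemidef_conjTranspose_mul_self M
  have hW' : Wᴴ * W = 1 := mem_unitaryGroup_iff'.mp hW
  have hconj : M * Mᴴ = W * (Mᴴ * M) * Wᴴ := by
    conv_lhs => rw [← hWM]
    rw [conjTranspose_mul, conjTranspose_msqrt hMM, Matrix.mul_assoc,
      ← Matrix.mul_assoc (msqrt _), msqrt_mul_msqrt hMM]
    simp only [Matrix.mul_assoc]
  rw [hconj, msqrt_mul_mul_conjTranspose hMM hW', trace_mul_cycle, hW', Matrix.one_mul]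

/-- Padding `M` to the square matrix `!![0, M; 0, 0]` reduces to the square case. -/
theorem trace_msqrt_conjTranspose_mul_self (M : Matrix m n ℂ) :
    (msqrt (Mᴴ * M)).trace = (msqrt (M * Mᴴ)).trace := by
  have h := trace_msqrt_conjTranspose_mul_self_of_square
    (fromBlocks 0 M 0 0 : Matrix (m ⊕ n) (m ⊕ n) ℂ)
  simp only [fromBlocks_conjTranspose, fromBlocks_multiply, conjTranspose_zero, Matrix.zero_mul,
    Matrix.mul_zero, add_zero, zero_add] at h
  rw [msqrt_fromBlocks_zero .zero (posSemidef_conjTranspose_mul_self M),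
    msqrt_fromBlocks_zero (posSemidef_self_mul_conjTranspose M) .zero, trace_fromBlocks,
    trace_fromBlocks] at h
  simpa [msqrt_zero] using h

theorem fidelity_mul_conjTranspose (A B : Matrix m n ℂ) :
    fidelity (A * Aᴴ) (B * Bᴴ) = (msqrt ((Aᴴ * B)ᴴ * (Aᴴ * B))).trace.re := by
  have hQ := posSemidef_self_mul_conjTranspose B
  set G := Aᴴ * msqrt (B * Bᴴ)
  have hGG : Gᴴ * G = msqrt (B * Bᴴ) * (A * Aᴴ) * msqrt (B * Bᴴ) := by
    simp only [G, conjTranspose_mul, conjTranspose_conjTranspose, conjTranspose_msqrt hQ,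
      Matrix.mul_assoc]
  have hGG' : G * Gᴴ = (Aᴴ * B) * (Aᴴ * B)ᴴ := by
    simp only [G, conjTranspose_mul, conjTranspose_conjTranspose, conjTranspose_msqrt hQ,
      Matrix.mul_assoc]
    rw [← Matrix.mul_assoc (msqrt _), msqrt_mul_msqrt hQ, Matrix.mul_assoc]
  rw [fidelity, ← hGG, trace_msqrt_conjTranspose_mul_self, hGG',
    ← conjTranspose_conjTranspose (Aᴴ * B), ← trace_msqrt_conjTranspose_mul_self,
    conjTranspose_conjTranspose]

/-- Expanding `0 ≤ ‖R - U R‖²` for `R = √S`. -/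
theorem re_trace_mul_unitary_le {S U : Matrix n n ℂ} (hS : S.PosSemidef)
    (hU : U ∈ unitaryGroup n ℂ) : (S * U).trace.re ≤ S.trace.re := by
  have hU' : Uᴴ * U = 1 := mem_unitaryGroup_iff'.mp hU
  set R := msqrt S
  have hR : Rᴴ = R := conjTranspose_msqrt hS
  have hRR : R * R = S := msqrt_mul_msqrt hS
  have hUR : (U * R)ᴴ * (U * R) = S := by
    rw [conjTranspose_mul, Matrix.mul_assoc, ← Matrix.mul_assoc Uᴴ, hU', Matrix.one_mul, hR, hRR]
  have hcross : (R * (U * R)).trace = (S * U).trace := by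
    rw [← Matrix.mul_assoc, trace_mul_comm, ← Matrix.mul_assoc, hRR]
  have hnonneg := (Complex.nonneg_iff.mp
    (posSemidef_conjTranspose_mul_self (R - U * R)).trace_nonneg).1
  rw [re_trace_conjTranspose_sub_mul_sub, hR, hRR, hUR, hcross] at hnonneg
  linarith

end Trace

section TraceNorm

variable {m n : Type*} [Fintype m] [Fintype n] [DecidableEq n]

theorem isGreatest_re_trace_mul_unitary (M : Matrix n n ℂ) :
    IsGreatest {t | ∃ V ∈ unitaryGroup n ℂ, t = (M * V).trace.re}
      (msqrt (Mᴴ * M)).trace.re := by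
  obtain ⟨W, hW, hWM⟩ := exists_unitary_mul_msqrt_eq M
  have hS := posSemidef_msqrt (posSemidef_conjTranspose_mul_self M)
  set S := msqrt (Mᴴ * M)
  refine ⟨⟨star W, Unitary.star_mem hW, ?_⟩, ?_⟩
  · rw [← hWM, Matrix.mul_assoc, trace_mul_comm, Matrix.mul_assoc,
      mem_unitaryGroup_iff'.mp hW, Matrix.mul_one]
  · rintro t ⟨V, hV, rfl⟩
    rw [← hWM, Matrix.mul_assoc, trace_mul_comm, Matrix.mul_assoc]
    exact re_trace_mul_unitary_le hS (mul_mem hV hW)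

lemma sum_normSq_sub_mul_unitary (A B : Matrix m n ℂ) {V : Matrix n n ℂ}
    (hV : V ∈ unitaryGroup n ℂ) :
    ∑ i, ∑ j, Complex.normSq ((A - B * V) i j) =
      (A * Aᴴ).trace.re + (B * Bᴴ).trace.re - 2 * (Aᴴ * B * V).trace.re := by
  have hBV : ((B * V)ᴴ * (B * V)).trace = (B * Bᴴ).trace := by
    rw [conjTranspose_mul, Matrix.mul_assoc, trace_mul_comm, Matrix.mul_assoc, Matrix.mul_assoc,
      ← star_eq_conjTranspose, mem_unitaryGroup_iff.mp hV, Matrix.mul_one, trace_mul_comm]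
  rw [← re_trace_conjTranspose_mul_self, re_trace_conjTranspose_sub_mul_sub, hBV,
    trace_mul_comm Aᴴ, Matrix.mul_assoc]

theorem isLeast_sum_normSq_sub_mul_unitary [DecidableEq m] (A B : Matrix m n ℂ) :
    IsLeast {t | ∃ V ∈ unitaryGroup n ℂ, t = ∑ i, ∑ j, Complex.normSq ((A - B * V) i j)}
      (buresSq (A * Aᴴ) (B * Bᴴ)) := by
  obtain ⟨⟨V, hV, hmax⟩, hle⟩ := isGreatest_re_trace_mul_unitary (Aᴴ * B)
  rw [buresSq, fidelity_mul_conjTranspose]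
  refine ⟨⟨V, hV, by rw [sum_normSq_sub_mul_unitary A B hV, ← hmax]⟩, ?_⟩
  rintro t ⟨U, hU, rfl⟩
  rw [sum_normSq_sub_mul_unitary A B hU]
  linarith [hle ⟨U, hU, rfl⟩]

end TraceNorm

section Stinespring

variable {X Y Z : Type*}

def choiFactor (K : Matrix (Y × Z) X ℂ) : Matrix (X × Y) Z ℂ :=
  of fun p z => K (p.2, z) p.1

lemma choi_eq_choiFactor_mul_conjTranspose [Fintype X] [DecidableEq X] [Fintype Z]
    {Φ : Matrix X X ℂ → Matrix Y Y ℂ} {K : Matrix (Y × Z) X ℂ}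
    (hK : ∀ M, ptraceAux (K * M * Kᴴ) = Φ M) :
    choi Φ = choiFactor K * (choiFactor K)ᴴ := by
  ext ⟨x, y⟩ ⟨x', y'⟩
  simp [choi, ← hK, ptraceAux, choiFactor, mul_apply, single, ite_and, eq_comm]

lemma choiFactor_sub (K L : Matrix (Y × Z) X ℂ) :
    choiFactor (K - L) = choiFactor K - choiFactor L :=
  rfl

lemma choiFactor_one_kronecker_mul [Fintype Y] [DecidableEq Y] [Fintype Z] [DecidableEq Z]
    (U : Matrix Z Z ℂ) (L : Matrix (Y × Z) X ℂ) :
    choiFactor (((1 : Matrix Y Y ℂ) ⊗ₖ U) * L) = choiFactor L * Uᵀ := by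
  ext ⟨x, y⟩ z
  simp only [choiFactor, of_apply, mul_apply, Fintype.sum_prod_type, transpose_apply]
  simp [kroneckerMap_apply, one_apply, ite_mul, mul_comm]

lemma sum_normSq_choiFactor [Fintype X] [Fintype Y] [Fintype Z] (D : Matrix (Y × Z) X ℂ) :
    ∑ q, ∑ z, Complex.normSq (choiFactor D q z) = ∑ p, ∑ x, Complex.normSq (D p x) := by
  simp only [choiFactor, of_apply, Fintype.sum_prod_type]
  rw [Finset.sum_comm]
  exact Finset.sum_congr rfl fun _ _ => Finset.sum_comm

lemma sum_normSq_sub_one_kronecker_mul [Fintype X] [Fintype Y] [DecidableEq Y] [Fintype Z]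
    [DecidableEq Z] (K L : Matrix (Y × Z) X ℂ) (U : Matrix Z Z ℂ) :
    ∑ p, ∑ x, Complex.normSq ((K - ((1 : Matrix Y Y ℂ) ⊗ₖ U) * L) p x) =
      ∑ q, ∑ z, Complex.normSq ((choiFactor K - choiFactor L * Uᵀ) q z) := by
  rw [← choiFactor_one_kronecker_mul, ← choiFactor_sub, sum_normSq_choiFactor]

end Stinespring

theorem choi_bures_eq_stinespring_frobenius_general
    {X Y : Type*} [Fintype X] [DecidableEq X] [Fintype Y] [DecidableEq Y] {r : ℕ}
    (Θ Ξ : Matrix X X ℂ →ₗ[ℂ] Matrix Y Y ℂ)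
    (K L : Matrix (Y × Fin r) X ℂ)
    (hK : ∀ M : Matrix X X ℂ, ptraceAux (K * M * Kᴴ) = Θ M)
    (hL : ∀ M : Matrix X X ℂ, ptraceAux (L * M * Lᴴ) = Ξ M) :
    IsLeast
      {t : ℝ | ∃ U : Matrix (Fin r) (Fin r) ℂ, Uᴴ * U = 1 ∧
        t = ∑ p : Y × Fin r, ∑ x : X,
          Complex.normSq ((K - ((1 : Matrix Y Y ℂ) ⊗ₖ U) * L) p x)}
      (buresSq (choi fun M => Θ M) (choi fun M => Ξ M)) := by
  have hunitary : ∀ U : Matrix (Fin r) (Fin r) ℂ, Uᴴ * U = 1 ↔ Uᵀ ∈ unitaryGroup (Fin r) ℂ :=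
    fun U => by rw [transpose_mem_unitaryGroup_iff, mem_unitaryGroup_iff', star_eq_conjTranspose]
  have hset : {t : ℝ | ∃ U : Matrix (Fin r) (Fin r) ℂ, Uᴴ * U = 1 ∧
      t = ∑ p, ∑ x, Complex.normSq ((K - ((1 : Matrix Y Y ℂ) ⊗ₖ U) * L) p x)} =
      {t | ∃ V ∈ unitaryGroup (Fin r) ℂ,
        t = ∑ q, ∑ z, Complex.normSq ((choiFactor K - choiFactor L * V) q z)} := by
    ext t
    constructor
    · rintro ⟨U, hU, rfl⟩
      exact ⟨Uᵀ, (hunitary U).mp hU, sum_normSq_sub_one_kronecker_mul K L U⟩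
    · rintro ⟨V, hV, rfl⟩
      exact ⟨Vᵀ, (hunitary Vᵀ).mpr (by rwa [transpose_transpose]),
        by rw [sum_normSq_sub_one_kronecker_mul, transpose_transpose]⟩
  rw [hset, choi_eq_choiFactor_mul_conjTranspose hK, choi_eq_choiFactor_mul_conjTranspose hL]
  exact isLeast_sum_normSq_sub_mul_unitary _ _

/-- For CP maps `Θ, Ξ` (PSD Choi matrices) with Stinespring operators
`K, L : 𝒳 → 𝒴 ⊗ 𝒵`, `𝒵 = ℂ^r`, `r` at least the ranks of the Choi matrices, the Bures
distance between the Choi matrices equals the minimal squared Frobenius distance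
`‖K − (I ⊗ U) L‖_F²` over unitaries `U` on `𝒵`: the Choi–Bures distance coincides with
the Stinespring–Frobenius distance. -/
theorem choi_bures_eq_stinespring_frobenius
    {X Y : Type*} [Fintype X] [DecidableEq X] [Fintype Y] [DecidableEq Y] {r : ℕ}
    (Θ Ξ : Matrix X X ℂ →ₗ[ℂ] Matrix Y Y ℂ)
    (hΘ : (choi fun M => Θ M).PosSemidef) (hΞ : (choi fun M => Ξ M).PosSemidef)
    (hrΘ : (choi fun M => Θ M).rank ≤ r) (hrΞ : (choi fun M => Ξ M).rank ≤ r)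
    (K L : Matrix (Y × Fin r) X ℂ)
    (hK : ∀ M : Matrix X X ℂ, ptraceAux (K * M * Kᴴ) = Θ M)
    (hL : ∀ M : Matrix X X ℂ, ptraceAux (L * M * Lᴴ) = Ξ M) :
    IsLeast
      {t : ℝ | ∃ U : Matrix (Fin r) (Fin r) ℂ, Uᴴ * U = 1 ∧
        t = ∑ p : Y × Fin r, ∑ x : X,
          Complex.normSq ((K - ((1 : Matrix Y Y ℂ) ⊗ₖ U) * L) p x)}
      (buresSq (choi fun M => Θ M) (choi fun M => Ξ M)) :=
  choi_bures_eq_stinespring_frobenius_general Θ Ξ K L hK hL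
end
end
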